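/- Let Φ be the flow generated by a smooth vector field on a closed (compact, boundaryless) smooth manifold M, and let R be the chain recurrent set of Φ. If R has finitely many connected components R¹, …, R^r, then Σ_{i=1}^r cat_M(Rⁱ) ≥ cat(M). -/

import Mathlib

open Set Filter
open scoped Manifold Topology

/-- A smooth vector field on `M`: a smooth section of the tangent bundle. -/
def IsSmoothVF {n : ℕ} {M : Type} [TopologicalSpace M]
    [ChartedSpace (EuclideanSpace ℝ (Fin n)) M]
    [IsManifold (𝓡 n) (⊤ : ℕ∞) M]
    (v : (x : M) → TangentSpace (𝓡 n) x) : Prop :=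
  ContMDiff (𝓡 n) (𝓡 n).tangent (⊤ : ℕ∞)
    (fun x => (⟨x, v x⟩ : TangentBundle (𝓡 n) M))

/-- `γ : ℝ → M` is an integral curve of the vector field `v`:
`γ'(t) = v(γ(t))` for all `t`. -/
def IsIntCurve {n : ℕ} {M : Type} [TopologicalSpace M]
    [ChartedSpace (EuclideanSpace ℝ (Fin n)) M]
    [IsManifold (𝓡 n) (⊤ : ℕ∞) M]
    (v : (x : M) → TangentSpace (𝓡 n) x) (γ : ℝ → M) : Prop :=
  ∀ t : ℝ, HasMFDerivAt 𝓘(ℝ, ℝ) (𝓡 n) γ t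
    ((1 : ℝ →L[ℝ] ℝ).smulRight (v (γ t)))

/-- `Φ : M × ℝ → M` (curried) is the flow generated by the vector field `v`:
it is continuous, starts at the identity, satisfies the group law, and each
trajectory `t ↦ Φ x t` is an integral curve of `v`. -/
def IsFlowOf {n : ℕ} {M : Type} [TopologicalSpace M]
    [ChartedSpace (EuclideanSpace ℝ (Fin n)) M]
    [IsManifold (𝓡 n) (⊤ : ℕ∞) M]
    (v : (x : M) → TangentSpace (𝓡 n) x) (Φ : M → ℝ → M) : Prop :=
  Continuous (fun p : M × ℝ => Φ p.1 p.2) ∧ (∀ x : M, Φ x 0 = x) ∧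
    (∀ (x : M) (s t : ℝ), Φ x (s + t) = Φ (Φ x s) t) ∧
    ∀ x : M, IsIntCurve v (Φ x)

/-- The chain recurrent set of the flow `Φ` (with respect to the metric `d`):
points `x` such that for all `δ > 0` and `T > 1` there is a `(δ,T)`-chain
`x = x₀, x₁, …, x_N = x`, with times `tᵢ ≥ T` and
`d(x_{i-1}·t_i, x_i) < δ`. -/
def chainRecurrentSet {M : Type} [MetricSpace M] (Φ : M → ℝ → M) : Set M :=
  {x : M | ∀ δ > (0 : ℝ), ∀ T > (1 : ℝ),
    ∃ (N : ℕ) (xs : ℕ → M) (ts : ℕ → ℝ), 0 < N ∧ xs 0 = x ∧ xs N = x ∧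
      ∀ i < N, T ≤ ts i ∧ dist (Φ (xs i) (ts i)) (xs (i + 1)) < δ}

/-- The inclusion of `V` into `X` is null-homotopic. -/
def NullhomotopicIn (X : Type) [TopologicalSpace X] (V : Set X) : Prop :=
  ∃ (H : X × ℝ → X) (x₀ : X), ContinuousOn H (V ×ˢ Set.Icc (0 : ℝ) 1) ∧
    (∀ v ∈ V, H (v, 0) = v) ∧ (∀ v ∈ V, H (v, 1) = x₀)

/-- `cat_X(A) ≤ k`: the subset `A` can be covered by `k` open subsets of `X`,
each null-homotopic in `X`. -/
def CatLE (X : Type) [TopologicalSpace X] (A : Set X) (k : ℕ) : Prop :=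
  ∃ V : Fin k → Set X, (∀ i, IsOpen (V i)) ∧ A ⊆ ⋃ i, V i ∧
    ∀ i, NullhomotopicIn X (V i)

/-- `cat_X(A)`, the Lusternik–Schnirelmann category of `A` in `X`. -/
noncomputable def catSet (X : Type) [TopologicalSpace X] (A : Set X) : ℕ :=
  sInf {k | CatLE X A k}

/-- `cat(X)`, the Lusternik–Schnirelmann category of `X`. -/
noncomputable def catSpace (X : Type) [TopologicalSpace X] : ℕ :=
  catSet X Set.univ

/-!
Every orbit eventually settles near a single component `Rⁱ`: its ω-limit set is chain
recurrent and the components have pairwise disjoint neighbourhoods `Oⁱ`. So `M` is covered by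
the open sets `Bⁱ` of points whose orbit spends a time interval of length `T` in a small
neighbourhood `Nⁱ ⊆ Oⁱ` of `Rⁱ`. Between two such sojourns the orbit cannot leave `Oⁱ`: each
intermediate point closes up into a `(δ,T)`-loop through a chain inside `Rⁱ`, so it lies in
`⋃ Oʲ` once `(δ,T)` is fine enough, and connectedness keeps it in `Oⁱ`. A partition of unity
yields a continuous time `θⁱ` on `Bⁱ` with `x·θⁱ(x) ∈ Oⁱ`, and flowing for that time deforms
`Bⁱ` into `Oⁱ`, which is covered by `cat_M(Rⁱ)` open sets null-homotopic in `M`.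
-/

open Metric Relation Function

theorem Relation.transGen_iff_exists_nat_seq {α : Type*} {r : α → α → Prop} {a b : α} :
    TransGen r a b ↔
      ∃ N, 0 < N ∧ ∃ xs : ℕ → α, xs 0 = a ∧ xs N = b ∧ ∀ i < N, r (xs i) (xs (i + 1)) := by
  refine ⟨fun h => ?_, fun ⟨N, hN, xs, h0, hN', hs⟩ => ?_⟩
  · induction h using TransGen.head_induction_on with
    | @single a hab => exact ⟨1, one_pos, fun i => if i = 0 then a else b, by simp, by simp,
        fun i hi => by simpa [Nat.lt_one_iff.mp hi] using hab⟩
    | @head a c hac _ ih =>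
      obtain ⟨N, hN, xs, h0, hN', hs⟩ := ih
      refine ⟨N + 1, N.succ_pos, fun i => if i = 0 then a else xs (i - 1), by simp,
        by simpa using hN', fun i hi => ?_⟩
      rcases i with _ | i
      · simpa [h0] using hac
      · simpa using hs i (by omega)
  · subst h0 hN'
    exact TransGen.lift xs (fun _ _ h => h) _ _
      (transGen_of_succ_of_lt _ (fun i hi => by simpa using hs i hi.2) hN)

theorem IsPreconnected.subset_of_subset_iUnion {X ι : Type*} [TopologicalSpace X] {s : Set X}
    {U : ι → Set X} (hs : IsPreconnected s) (hU : ∀ i, IsOpen (U i))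
    (hd : Pairwise (Disjoint on U)) (hsU : s ⊆ ⋃ i, U i) {x : X} {i : ι} (hx : x ∈ s)
    (hxi : x ∈ U i) : s ⊆ U i := by
  refine hs.subset_left_of_subset_union (hU i) (isOpen_biUnion fun j _ => hU j)
    (disjoint_iUnion₂_right.mpr fun j hj => hd (Ne.symm hj)) (fun y hy => ?_) ⟨x, hx, hxi⟩
  obtain ⟨j, hj⟩ := mem_iUnion.mp (hsU hy)
  by_cases hji : j = i
  · exact Or.inl (hji ▸ hj)
  · exact Or.inr (mem_biUnion (s := {i}ᶜ) hji hj)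

theorem IsClosed.connectedComponentIn {X : Type*} [TopologicalSpace X] {F : Set X}
    (hF : IsClosed F) (x : X) : IsClosed (connectedComponentIn F x) := by
  by_cases hx : x ∈ F
  · rw [connectedComponentIn_eq_image hx]
    exact hF.isClosedEmbedding_subtypeVal.isClosedMap _ isClosed_connectedComponent
  · rw [connectedComponentIn_eq_empty hx]
    exact isClosed_empty

theorem exists_isOpen_superset_pairwise_disjoint {ι X : Type*} [Finite ι] [MetricSpace X]
    {K : ι → Set X} (hK : ∀ i, IsClosed (K i)) (hne : ∀ i, (K i).Nonempty)
    (hd : Pairwise (Disjoint on K)) :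
    ∃ U : ι → Set X, (∀ i, IsOpen (U i)) ∧ (∀ i, K i ⊆ U i) ∧ Pairwise (Disjoint on U) := by
  refine ⟨fun i => {x | ∀ j ≠ i, infDist x (K i) < infDist x (K j)}, fun i => ?_,
    fun i x hx j hj => ?_, fun i j hij => ?_⟩
  · simp only [ofPred_forall]
    exact isOpen_iInter_of_finite fun j => isOpen_iInter_of_finite fun _ =>
      isOpen_lt (continuous_infDist_pt _) (continuous_infDist_pt _)
  · rw [infDist_zero_of_mem hx]
    exact ((hK j).notMem_iff_infDist_pos (hne j)).mp ((hd hj.symm).notMem_of_mem_left hx)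
  · exact disjoint_left.mpr fun x hxi hxj => (hxi j hij.symm).asymm (hxj i hij)

theorem isOpen_setOf_mapsTo_of_continuous {X Y Z : Type*} [TopologicalSpace X]
    [TopologicalSpace Y] [TopologicalSpace Z] {f : X → Y → Z}
    (hf : Continuous fun p : X × Y => f p.1 p.2) {K : Set Y} (hK : IsCompact K) {U : Set Z}
    (hU : IsOpen U) : IsOpen {x | MapsTo (f x) K U} :=
  (ContinuousMap.isOpen_setOfPred_mapsTo hK hU).preimage (ContinuousMap.curry ⟨_, hf⟩).continuous

theorem exists_continuousOn_mem_Icc_of_mem {X : Type*} [MetricSpace X] (W : ℝ → Set X)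
    (hW : ∀ a, IsOpen (W a)) :
    ∃ θ : X → ℝ, ContinuousOn θ (⋃ a, W a) ∧
      ∀ x ∈ ⋃ a, W a, ∃ a b, x ∈ W a ∧ x ∈ W b ∧ θ x ∈ Icc a b := by
  classical
  set B := ⋃ a, W a
  -- The admissible values at `x` form an interval, so local choices glue by a partition of unity.
  obtain ⟨g, hg⟩ := exists_continuous_forall_mem_convex_of_local_const
    (t := fun x : B => {τ | ∃ a b, x.1 ∈ W a ∧ x.1 ∈ W b ∧ τ ∈ Icc a b})
    (fun x => OrdConnected.convex ⟨fun τ₁ ⟨a, _, ha, _, hτ₁⟩ τ₂ ⟨_, b, _, hb, hτ₂⟩ τ hτ =>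
      ⟨a, b, ha, hb, hτ₁.1.trans hτ.1, hτ.2.trans hτ₂.2⟩⟩)
    (fun x => by
      obtain ⟨a, ha⟩ := mem_iUnion.mp x.2
      exact ⟨a, mem_of_superset (((hW a).preimage continuous_subtype_val).mem_nhds ha)
        fun y hy => ⟨a, a, hy, hy, left_mem_Icc.mpr le_rfl⟩⟩)
  refine ⟨fun x => if h : x ∈ B then g ⟨x, h⟩ else 0,
    continuousOn_iff_continuous_domRestrict.mpr ?_, fun x hx => ?_⟩
  · convert g.continuous using 1
    ext ⟨x, hx⟩
    exact dif_pos hx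
  · simp only [dif_pos hx]
    exact hg ⟨x, hx⟩

section Category

variable {X : Type} [TopologicalSpace X] {A B : Set X} {k : ℕ}

theorem CatLE.mono (h : CatLE X A k) (hBA : B ⊆ A) : CatLE X B k :=
  let ⟨V, hVo, hAV, hVn⟩ := h
  ⟨V, hVo, hBA.trans hAV, hVn⟩

theorem CatLE.exists_isOpen_superset (h : CatLE X A k) :
    ∃ U, IsOpen U ∧ A ⊆ U ∧ CatLE X U k :=
  let ⟨V, hVo, hAV, hVn⟩ := h
  ⟨⋃ i, V i, isOpen_iUnion hVo, hAV, V, hVo, subset_rfl, hVn⟩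

theorem catLE_catSet (h : ∃ k, CatLE X univ k) (A : Set X) : CatLE X A (catSet X A) :=
  Nat.sInf_mem (h.imp fun _ hk => hk.mono (subset_univ A))

theorem CatLE.iUnion {r : ℕ} {A : Fin r → Set X} {k : Fin r → ℕ}
    (h : ∀ i, CatLE X (A i) (k i)) : CatLE X (⋃ i, A i) (∑ i, k i) := by
  choose V hVo hAV hVn using h
  refine ⟨fun j => V (finSigmaFinEquiv.symm j).1 (finSigmaFinEquiv.symm j).2, fun j => hVo _ _,
    fun x hx => ?_, fun j => hVn _ _⟩
  obtain ⟨i, hi⟩ := mem_iUnion.mp hx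
  obtain ⟨j, hj⟩ := mem_iUnion.mp (hAV i hi)
  exact mem_iUnion.mpr ⟨finSigmaFinEquiv ⟨i, j⟩, by rwa [Equiv.symm_apply_apply]⟩

theorem NullhomotopicIn.of_deformation {V : Set X} (hV : NullhomotopicIn X V) (K : X × ℝ → X)
    (hK : ContinuousOn K (A ×ˢ Icc 0 1)) (hK₀ : ∀ x ∈ A, K (x, 0) = x)
    (hK₁ : ∀ x ∈ A, K (x, 1) ∈ V) : NullhomotopicIn X A := by
  classical
  obtain ⟨H, x₀, hH, hH₀, hH₁⟩ := hV
  let t : Set (X × ℝ) := {p | p.2 ≤ 1 / 2}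
  have hKend : ContinuousOn (fun p : X × ℝ => K (p.1, 1)) (A ×ˢ Icc 0 1) :=
    hK.comp (continuous_fst.prodMk continuous_const).continuousOn
      fun p hp => ⟨hp.1, right_mem_Icc.mpr zero_le_one⟩
  refine ⟨t.piecewise (fun p => K (p.1, 2 * p.2)) (fun p => H (K (p.1, 1), 2 * p.2 - 1)), x₀,
    ContinuousOn.piecewise ?_ ?_ ?_, fun x hx => ?_, fun x hx => ?_⟩
  · rintro ⟨x, s⟩ ⟨⟨hx, -⟩, hfr⟩
    obtain rfl : s = 1 / 2 := by
      simpa using frontier_le_subset_eq continuous_snd continuous_const hfr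
    simp [hH₀ _ (hK₁ x hx)]
  · refine hK.comp ((continuous_fst.prodMk (continuous_const.mul continuous_snd)).continuousOn) ?_
    rintro ⟨x, s⟩ ⟨⟨hx, hs₀, -⟩, hs⟩
    have : s ≤ 1 / 2 := by rwa [closure_le_eq continuous_snd continuous_const] at hs
    exact ⟨hx, by linarith, by linarith⟩
  · refine hH.comp ((hKend.mono inter_subset_left).prodMk
      ((continuous_const.mul continuous_snd).sub continuous_const).continuousOn) ?_
    rintro ⟨x, s⟩ ⟨⟨hx, -, hs₁⟩, hs⟩
    have : 1 / 2 ≤ s := closure_lt_subset_le continuous_const continuous_snd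
      (by simpa only [t, compl_ofPred, not_le] using hs)
    exact ⟨hK₁ x hx, by linarith, by linarith⟩
  · rw [piecewise_eq_of_mem _ _ _ (by norm_num [t])]
    simpa using hK₀ x hx
  · rw [piecewise_eq_of_notMem _ _ _ (by norm_num [t])]
    norm_num [hH₁ _ (hK₁ x hx)]

theorem CatLE.of_deformation (hA : IsOpen A) (hB : CatLE X B k) (K : X × ℝ → X)
    (hK : ContinuousOn K (A ×ˢ Icc 0 1)) (hK₀ : ∀ x ∈ A, K (x, 0) = x)
    (hK₁ : ∀ x ∈ A, K (x, 1) ∈ B) : CatLE X A k := by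
  obtain ⟨V, hVo, hBV, hVn⟩ := hB
  have hKend : ContinuousOn (fun x => K (x, 1)) A :=
    hK.comp (continuous_id.prodMk continuous_const).continuousOn
      fun x hx => ⟨hx, right_mem_Icc.mpr zero_le_one⟩
  refine ⟨fun i => A ∩ (fun x => K (x, 1)) ⁻¹' V i,
    fun i => hKend.isOpen_inter_preimage hA (hVo i), fun x hx => ?_, fun i => ?_⟩
  · obtain ⟨i, hi⟩ := mem_iUnion.mp (hBV (hK₁ x hx))
    exact mem_iUnion.mpr ⟨i, hx, hi⟩
  · exact (hVn i).of_deformation K (hK.mono (prod_mono inter_subset_left subset_rfl))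
      (fun x hx => hK₀ x hx.1) fun x hx => hx.2

theorem OpenPartialHomeomorph.nullhomotopicIn_source_inter_preimage {E : Type*}
    [NormedAddCommGroup E] [NormedSpace ℝ E] (e : OpenPartialHomeomorph X E) {s : Set E}
    (hs : Convex ℝ s) (hst : s ⊆ e.target) {c : E} (hc : c ∈ s) :
    NullhomotopicIn X (e.source ∩ e ⁻¹' s) := by
  have hmem : ∀ p ∈ (e.source ∩ e ⁻¹' s) ×ˢ Icc (0 : ℝ) 1, (1 - p.2) • e p.1 + p.2 • c ∈ s :=
    fun p ⟨⟨_, hx⟩, h₀, h₁⟩ => hs hx hc (by linarith) h₀ (by ring)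
  refine ⟨fun p => e.symm ((1 - p.2) • e p.1 + p.2 • c), e.symm c,
    e.continuousOn_symm.comp (ContinuousOn.add ?_ ?_) fun p hp => hst (hmem p hp),
    fun x hx => by simp [e.left_inv hx.1], fun x _ => by simp⟩
  · exact (continuousOn_const.sub continuous_snd.continuousOn).smul
      (e.continuousOn.comp continuous_fst.continuousOn fun p hp => hp.1.1)
  · exact continuous_snd.continuousOn.smul continuousOn_const

theorem exists_catLE_univ [CompactSpace X]
    (h : ∀ x : X, ∃ U, IsOpen U ∧ x ∈ U ∧ NullhomotopicIn X U) : ∃ k, CatLE X univ k := by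
  choose U hUo hxU hUn using h
  obtain ⟨s, hs⟩ := isCompact_univ.elim_finite_subcover U hUo fun x _ => mem_iUnion.mpr ⟨x, hxU x⟩
  refine ⟨s.card, fun i => U (s.equivFin.symm i), fun i => hUo _, fun x hx => ?_, fun i => hUn _⟩
  obtain ⟨y, hy, hxy⟩ := mem_iUnion₂.mp (hs hx)
  exact mem_iUnion.mpr ⟨s.equivFin ⟨y, hy⟩, by simpa using hxy⟩

theorem ChartedSpace.exists_nullhomotopicIn_nhds {E : Type*} [NormedAddCommGroup E]
    [NormedSpace ℝ E] [ChartedSpace E X] (x : X) :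
    ∃ U, IsOpen U ∧ x ∈ U ∧ NullhomotopicIn X U := by
  set e := chartAt E x
  obtain ⟨ε, hε, hball⟩ := Metric.isOpen_iff.mp e.open_target _ (mem_chart_target E x)
  exact ⟨e.source ∩ e ⁻¹' ball (e x) ε, e.isOpen_inter_preimage isOpen_ball,
    ⟨mem_chart_source E x, mem_ball_self hε⟩,
    e.nullhomotopicIn_source_inter_preimage (convex_ball _ _) hball (mem_ball_self hε)⟩

end Category

section Chains

variable {M : Type} [MetricSpace M] {Φ : M → ℝ → M} {δ δ' T T' : ℝ} {x y z : M}

def ChainStep (Φ : M → ℝ → M) (δ T : ℝ) (x y : M) : Prop :=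
  ∃ t, T ≤ t ∧ dist (Φ x t) y < δ

abbrev FlowChain (Φ : M → ℝ → M) (δ T : ℝ) : M → M → Prop :=
  TransGen (ChainStep Φ δ T)

theorem ChainStep.mono (hδ : δ ≤ δ') (hT : T' ≤ T) (h : ChainStep Φ δ T x y) :
    ChainStep Φ δ' T' x y :=
  let ⟨t, ht, hd⟩ := h
  ⟨t, hT.trans ht, hd.trans_le hδ⟩

theorem FlowChain.mono (hδ : δ ≤ δ') (hT : T' ≤ T) (h : FlowChain Φ δ T x y) :
    FlowChain Φ δ' T' x y :=
  TransGen.mono (fun _ _ => ChainStep.mono hδ hT) _ _ h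

theorem FlowChain.retarget {ε : ℝ} (h : FlowChain Φ δ T x y) (hyz : dist y z < ε) :
    FlowChain Φ (δ + ε) T x z := by
  obtain ⟨w, hxw, t, ht, hd⟩ := TransGen.tail'_iff.mp h
  have hε : 0 ≤ ε := dist_nonneg.trans hyz.le
  refine TransGen.tail' (ReflTransGen.mono (fun _ _ => ChainStep.mono (by linarith) le_rfl) _ _ hxw)
    ⟨t, ht, ?_⟩
  linarith [dist_triangle (Φ w t) y z]

theorem mem_chainRecurrentSet_iff :
    x ∈ chainRecurrentSet Φ ↔ ∀ δ > 0, ∀ T > 1, FlowChain Φ δ T x x := by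
  refine forall₂_congr fun δ _ => forall₂_congr fun T _ => ?_
  rw [FlowChain, transGen_iff_exists_nat_seq]
  constructor
  · rintro ⟨N, xs, ts, hN, h0, hN', hs⟩
    exact ⟨N, hN, xs, h0, hN', fun i hi => ⟨ts i, hs i hi⟩⟩
  · rintro ⟨N, hN, xs, h0, hN', hs⟩
    choose! ts hts using hs
    exact ⟨N, xs, ts, hN, h0, hN', hts⟩

theorem eventually_chainParams :
    ∀ᶠ p : ℝ × ℝ in 𝓝[>] 0 ×ˢ atTop, 0 < p.1 ∧ 1 < p.2 :=
  eventually_mem_nhdsWithin.prod_mk (eventually_gt_atTop 1)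

theorem eventually_not_flowChain_self (hc : Continuous fun p : M × ℝ => Φ p.1 p.2)
    (hadd : ∀ x s t, Φ x (s + t) = Φ (Φ x s) t) (hy : y ∉ chainRecurrentSet Φ) :
    ∀ᶠ q : (ℝ × ℝ) × M in (𝓝[>] 0 ×ˢ atTop) ×ˢ 𝓝 y, ¬ FlowChain Φ q.1.1 q.1.2 q.2 q.2 := by
  rw [mem_chainRecurrentSet_iff] at hy
  push Not at hy
  obtain ⟨δ, hδ, T, hT, hno⟩ := hy
  have hparams : ∀ᶠ p : ℝ × ℝ in 𝓝[>] 0 ×ˢ atTop, p.1 ≤ δ / 3 ∧ 2 * T ≤ p.2 :=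
    (eventually_nhdsWithin_of_eventually_nhds (eventually_le_nhds (by positivity))).prod_mk
      (eventually_ge_atTop _)
  have hcontT : Continuous fun x => Φ x T := hc.comp (continuous_id.prodMk continuous_const)
  have hnear : ∀ᶠ z in 𝓝 y, dist z y < δ / 3 ∧ dist (Φ y T) (Φ z T) < δ / 3 := by
    filter_upwards [ball_mem_nhds y (by positivity : 0 < δ / 3),
      hcontT.continuousAt.preimage_mem_nhds (ball_mem_nhds (Φ y T) (by positivity : 0 < δ / 3))]
      with z hzy hyz
    exact ⟨hzy, mem_ball'.mp hyz⟩
  filter_upwards [hparams.prod_mk hnear]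
  rintro ⟨⟨δ', T'⟩, z⟩ ⟨⟨hδ', hT'⟩, hzy, hyz⟩ (hchain : FlowChain Φ δ' T' z z)
  dsimp only at hδ' hT' hzy hyz
  obtain ⟨c, ⟨t, ht, hd⟩, hcz⟩ := TransGen.head'_iff.mp hchain
  -- From `y`, flow for time `T` and jump to `z·T`; the first step of the loop at `z` takes
  -- time at least `2 * T`, so the loop can continue from `z·T`.
  have hstep : ChainStep Φ (δ / 3) T (Φ z T) c :=
    ⟨t - T, by linarith, by rw [← hadd, add_sub_cancel]; linarith⟩
  have hback : FlowChain Φ (δ / 3 + δ / 3) T (Φ z T) y :=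
    FlowChain.retarget (TransGen.head' hstep
      (ReflTransGen.mono (fun _ _ => ChainStep.mono hδ' (by linarith)) _ _ hcz)) hzy
  exact hno (TransGen.head ⟨T, le_rfl, by linarith⟩ (FlowChain.mono (by linarith) le_rfl hback))

theorem isClosed_chainRecurrentSet (hc : Continuous fun p : M × ℝ => Φ p.1 p.2)
    (hadd : ∀ x s t, Φ x (s + t) = Φ (Φ x s) t) : IsClosed (chainRecurrentSet Φ) := by
  refine isOpen_compl_iff.mp (isOpen_iff_mem_nhds.mpr fun y hy => ?_)
  obtain ⟨P, hP, Q, hQ, hPQ⟩ := eventually_prod_iff.mp (eventually_not_flowChain_self hc hadd hy)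
  obtain ⟨p, hp, hδ, hT⟩ := (hP.and eventually_chainParams).exists
  filter_upwards [hQ] with z hz hzR
  exact hPQ hp hz (mem_chainRecurrentSet_iff.mp hzR _ hδ _ hT)

theorem exists_flowChain_scale [CompactSpace M] (hc : Continuous fun p : M × ℝ => Φ p.1 p.2)
    (hadd : ∀ x s t, Φ x (s + t) = Φ (Φ x s) t) {U : Set M} (hU : IsOpen U)
    (hRU : chainRecurrentSet Φ ⊆ U) :
    ∃ δ > 0, ∃ T > 1, ∀ y, FlowChain Φ δ T y y → y ∈ U := by
  have h := hU.isClosed_compl.isCompact.mem_prod_nhdsSet_of_forall fun y hy =>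
    eventually_not_flowChain_self hc hadd fun hyR => hy (hRU hyR)
  obtain ⟨p, hp, hδ, hT⟩ := ((Filter.Eventually.curry h).and eventually_chainParams).exists
  exact ⟨p.1, hδ, p.2, hT, fun y hy => by_contra fun hyU => hp.self_of_nhdsSet y hyU hy⟩

theorem omegaLimit_subset_chainRecurrentSet (hc : Continuous fun p : M × ℝ => Φ p.1 p.2)
    (hadd : ∀ x s t, Φ x (s + t) = Φ (Φ x s) t) (x : M) :
    omegaLimit atTop (fun t x => Φ x t) {x} ⊆ chainRecurrentSet Φ := by
  intro y hy
  rw [mem_omegaLimit_singleton_iff_mapClusterPt, mapClusterPt_iff_frequently] at hy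
  refine mem_chainRecurrentSet_iff.mpr fun δ hδ T hT => ?_
  have hcontT : Continuous fun z => Φ z T := hc.comp (continuous_id.prodMk continuous_const)
  obtain ⟨t₁, -, ht₁⟩ := frequently_atTop.mp
    (hy _ (hcontT.continuousAt.preimage_mem_nhds (ball_mem_nhds (Φ y T) hδ))) 0
  obtain ⟨t₂, ht₂, ht₂y⟩ := frequently_atTop.mp (hy _ (ball_mem_nhds y hδ)) (t₁ + 2 * T)
  refine TransGen.head (b := Φ x (t₁ + T)) ⟨T, le_rfl, ?_⟩
    (TransGen.single ⟨t₂ - (t₁ + T), by linarith, ?_⟩)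
  · rw [hadd]
    exact mem_ball'.mp ht₁
  · rw [← hadd, add_sub_cancel]
    exact ht₂y

theorem IsPreconnected.flowChain {C : Set M} (hC : IsPreconnected C)
    (hCR : C ⊆ chainRecurrentSet Φ) (hδ : 0 < δ) (hT : 1 < T) (hx : x ∈ C) (hy : y ∈ C) :
    FlowChain Φ δ T x y := by
  have hloop : ∀ z ∈ C, FlowChain Φ (δ / 2) T z z := fun z hz =>
    mem_chainRecurrentSet_iff.mp (hCR hz) _ (half_pos hδ) _ hT
  refine hC.induction₂' (FlowChain Φ δ T) (fun x hx => ?_) (fun _ _ _ _ _ _ => TransGen.trans)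
    hx hy
  filter_upwards [self_mem_nhdsWithin, mem_nhdsWithin_of_mem_nhds (ball_mem_nhds x (half_pos hδ))]
    with y hyC hxy
  exact ⟨FlowChain.mono (by linarith) le_rfl (FlowChain.retarget (hloop x hx) (mem_ball'.mp hxy)),
    FlowChain.mono (by linarith) le_rfl (FlowChain.retarget (hloop y hyC) hxy)⟩

theorem flowChain_self_of_mem_thickening (hadd : ∀ x s t, Φ x (s + t) = Φ (Φ x s) t)
    {C : Set M} (hC : IsPreconnected C) (hCR : C ⊆ chainRecurrentSet Φ) (hδ : 0 < δ)
    (hT : 1 < T) {a b t : ℝ} (ha : Φ x a ∈ thickening (δ / 2) C)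
    (hb : Φ x b ∈ thickening (δ / 2) C) (hat : a + T ≤ t) (htb : t + T ≤ b) :
    FlowChain Φ δ T (Φ x t) (Φ x t) := by
  obtain ⟨wa, hwa, hda⟩ := mem_thickening_iff.mp ha
  obtain ⟨wb, hwb, hdb⟩ := mem_thickening_iff.mp hb
  have hback : FlowChain Φ (δ / 2 + δ / 2) T wb (Φ x a) :=
    FlowChain.retarget (hC.flowChain hCR (half_pos hδ) hT hwb hwa) (by rwa [dist_comm])
  refine TransGen.head ⟨b - t, by linarith, ?_⟩
    (TransGen.tail (FlowChain.mono (by linarith) le_rfl hback) ⟨t - a, by linarith, ?_⟩)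
  · rw [← hadd, add_sub_cancel]
    linarith
  · rw [← hadd, add_sub_cancel, dist_self]
    exact hδ

end Chains

section Dwell

variable {M : Type} [MetricSpace M] {Φ : M → ℝ → M} {δ T : ℝ}

def dwellSet (Φ : M → ℝ → M) (T : ℝ) (N : Set M) : Set M :=
  ⋃ a : ℝ, {x | MapsTo (Φ x) (Icc a (a + T)) N}

theorem isOpen_dwellSet (hc : Continuous fun p : M × ℝ => Φ p.1 p.2) {N : Set M}
    (hN : IsOpen N) : IsOpen (dwellSet Φ T N) :=
  isOpen_iUnion fun _ => isOpen_setOf_mapsTo_of_continuous hc isCompact_Icc hN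

theorem iUnion_dwellSet_eq_univ [CompactSpace M] (hc : Continuous fun p : M × ℝ => Φ p.1 p.2)
    (hadd : ∀ x s t, Φ x (s + t) = Φ (Φ x s) t) {ι : Type*} {N : ι → Set M}
    (hN : ∀ i, IsOpen (N i)) (hd : Pairwise (Disjoint on N))
    (hRN : chainRecurrentSet Φ ⊆ ⋃ i, N i) (T : ℝ) :
    ⋃ i, dwellSet Φ T (N i) = univ := by
  refine eq_univ_of_forall fun x => ?_
  obtain ⟨t₀, ht₀⟩ := (eventually_mapsTo_of_isOpen_of_omegaLimit_subset atTop
    (fun t x => Φ x t) {x} (isOpen_iUnion hN)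
    ((omegaLimit_subset_chainRecurrentSet hc hadd x).trans hRN)).exists_forall_of_atTop
  have hcover : Φ x '' Ici t₀ ⊆ ⋃ i, N i := image_subset_iff.mpr fun t ht => ht₀ t ht rfl
  obtain ⟨l, hl⟩ := mem_iUnion.mp (hcover (mem_image_of_mem _ self_mem_Ici))
  have htail := (isPreconnected_Ici.image _
    (hc.comp (continuous_const.prodMk continuous_id)).continuousOn).subset_of_subset_iUnion
    hN hd hcover (mem_image_of_mem _ self_mem_Ici) hl
  exact mem_iUnion.mpr ⟨l, mem_iUnion.mpr ⟨t₀, fun t ht => htail (mem_image_of_mem _ ht.1)⟩⟩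

theorem exists_continuousOn_flow_mem_of_dwellSet (hc : Continuous fun p : M × ℝ => Φ p.1 p.2)
    (hadd : ∀ x s t, Φ x (s + t) = Φ (Φ x s) t) {ι : Type*} {O : ι → Set M}
    (hO : ∀ i, IsOpen (O i)) (hd : Pairwise (Disjoint on O)) (hδ : 0 < δ) (hT : 1 < T)
    (hscale : ∀ y, FlowChain Φ δ T y y → y ∈ ⋃ i, O i) {C : Set M} (hC : IsPreconnected C)
    (hCR : C ⊆ chainRecurrentSet Φ) {N : Set M} {l : ι} (hN : IsOpen N) (hNO : N ⊆ O l)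
    (hNC : N ⊆ thickening (δ / 2) C) :
    ∃ θ : M → ℝ, ContinuousOn θ (dwellSet Φ T N) ∧ ∀ x ∈ dwellSet Φ T N, Φ x (θ x) ∈ O l := by
  have htrap : ∀ x a b, a ≤ b → MapsTo (Φ x) (Icc a (a + T)) N →
      MapsTo (Φ x) (Icc b (b + T)) N → MapsTo (Φ x) (Icc a b) (O l) := by
    intro x a b hab ha hb
    have hcover : MapsTo (Φ x) (Icc a b) (⋃ i, O i) := by
      intro t ht
      by_cases hta : t ≤ a + T
      · exact mem_iUnion.mpr ⟨l, hNO (ha ⟨ht.1, hta⟩)⟩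
      · exact hscale _ (flowChain_self_of_mem_thickening hadd hC hCR hδ hT
          (hNC (ha ⟨le_rfl, by linarith⟩)) (hNC (hb ⟨by linarith, le_rfl⟩)) (by linarith)
          (by linarith [ht.2]))
    exact mapsTo_iff_image_subset.mpr ((isPreconnected_Icc.image _
      (hc.comp (continuous_const.prodMk continuous_id)).continuousOn).subset_of_subset_iUnion
      hO hd (image_subset_iff.mpr hcover) (mem_image_of_mem _ (left_mem_Icc.mpr hab))
      (hNO (ha (left_mem_Icc.mpr (by linarith)))))
  obtain ⟨θ, hθ, hθmem⟩ := exists_continuousOn_mem_Icc_of_mem _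
    fun a => isOpen_setOf_mapsTo_of_continuous (K := Icc a (a + T)) hc isCompact_Icc hN
  refine ⟨θ, hθ, fun x hx => ?_⟩
  obtain ⟨a, b, ha, hb, hθab⟩ := hθmem x hx
  exact htrap x a b (hθab.1.trans hθab.2) ha hb hθab

theorem CatLE.of_flow (hc : Continuous fun p : M × ℝ => Φ p.1 p.2) (h0 : ∀ x, Φ x 0 = x)
    {A B : Set M} {k : ℕ} (hA : IsOpen A) (hB : CatLE M B k) {θ : M → ℝ}
    (hθ : ContinuousOn θ A) (hmaps : ∀ x ∈ A, Φ x (θ x) ∈ B) : CatLE M A k :=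
  hB.of_deformation hA (fun p => Φ p.1 (p.2 * θ p.1))
    (hc.comp_continuousOn (continuous_fst.continuousOn.prodMk (continuous_snd.continuousOn.mul
      (hθ.comp continuous_fst.continuousOn fun p hp => hp.1))))
    (fun x _ => by simp [h0]) fun x hx => by simpa using hmaps x hx

theorem catLE_univ_of_chainRecurrent_cover [CompactSpace M]
    (hc : Continuous fun p : M × ℝ => Φ p.1 p.2) (h0 : ∀ x, Φ x 0 = x)
    (hadd : ∀ x s t, Φ x (s + t) = Φ (Φ x s) t) {r : ℕ} {C : Fin r → Set M}
    (hC : ∀ i, IsPreconnected (C i)) (hCR : ⋃ i, C i = chainRecurrentSet Φ)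
    {O : Fin r → Set M} (hO : ∀ i, IsOpen (O i)) (hd : Pairwise (Disjoint on O))
    (hCO : ∀ i, C i ⊆ O i) {k : Fin r → ℕ} (hk : ∀ i, CatLE M (O i) (k i)) :
    CatLE M univ (∑ i, k i) := by
  obtain ⟨δ, hδ, T, hT, hscale⟩ :=
    exists_flowChain_scale hc hadd (isOpen_iUnion hO) (hCR.symm.subset.trans (iUnion_mono hCO))
  let N i := O i ∩ thickening (δ / 2) (C i)
  have hN : ∀ i, IsOpen (N i) := fun i => (hO i).inter isOpen_thickening
  have hdwell : ∀ i, CatLE M (dwellSet Φ T (N i)) (k i) := fun i => by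
    obtain ⟨θ, hθ, hmaps⟩ := exists_continuousOn_flow_mem_of_dwellSet hc hadd hO hd hδ hT hscale
      (hC i) ((subset_iUnion C i).trans hCR.subset) (hN i) inter_subset_left inter_subset_right
    exact (hk i).of_flow hc h0 (isOpen_dwellSet hc (hN i)) hθ hmaps
  rw [← iUnion_dwellSet_eq_univ hc hadd hN
    (fun i j hij => (hd hij).mono inter_subset_left inter_subset_left)
    (hCR.symm.subset.trans (iUnion_mono fun i =>
      subset_inter (hCO i) (self_subset_thickening (half_pos hδ) _))) T]
  exact CatLE.iUnion hdwell

end Dwell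

theorem sum_cat_components_chainRecurrent_ge_cat_general
    (n : ℕ) (M : Type) [MetricSpace M]
    [ChartedSpace (EuclideanSpace ℝ (Fin n)) M]
    [IsManifold (𝓡 n) (⊤ : ℕ∞) M]
    [CompactSpace M]
    (v : (x : M) → TangentSpace (𝓡 n) x)
    (Φ : M → ℝ → M) (hΦ : IsFlowOf v Φ)
    (r : ℕ) (Rc : Fin r → Set M)
    (hne : ∀ i, (Rc i).Nonempty)
    (hinj : Function.Injective Rc)
    (hunion : (⋃ i, Rc i) = chainRecurrentSet Φ)
    (hcomp : ∀ i, ∀ x ∈ Rc i, Rc i = connectedComponentIn (chainRecurrentSet Φ) x) :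
    catSpace M ≤ ∑ i, catSet M (Rc i) := by
  obtain ⟨hc, h0, hadd, -⟩ := hΦ
  have hpre : ∀ i, IsPreconnected (Rc i) := fun i =>
    (hne i).elim fun x hx => hcomp i x hx ▸ isPreconnected_connectedComponentIn
  have hclosed : ∀ i, IsClosed (Rc i) := fun i => (hne i).elim fun x hx =>
    hcomp i x hx ▸ (isClosed_chainRecurrentSet hc hadd).connectedComponentIn x
  have hdisj : Pairwise (Disjoint on Rc) := fun i j hij => disjoint_left.mpr fun x hi hj =>
    hij (hinj ((hcomp i x hi).trans (hcomp j x hj).symm))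
  obtain ⟨W, hWo, hRW, hWd⟩ := exists_isOpen_superset_pairwise_disjoint hclosed hne hdisj
  have hcatM : ∃ k, CatLE M univ k :=
    exists_catLE_univ (ChartedSpace.exists_nullhomotopicIn_nhds (E := EuclideanSpace ℝ (Fin n)))
  choose U hUo hRU hUcat using fun i => (catLE_catSet hcatM (Rc i)).exists_isOpen_superset
  exact Nat.sInf_le (catLE_univ_of_chainRecurrent_cover hc h0 hadd hpre hunion
    (fun i => (hWo i).inter (hUo i))
    (fun i j hij => (hWd hij).mono inter_subset_left inter_subset_left)
    (fun i => subset_inter (hRW i) (hRU i)) fun i => (hUcat i).mono inter_subset_right)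

/-- **(Theorem `xi=0`.)**  Let `Φ` be the flow of a smooth vector field on a
closed smooth manifold `M` and let `R` be its chain recurrent set.  If `R`
has finitely many connected components `R¹, …, R^r` then
`Σᵢ cat_M(Rⁱ) ≥ cat(M)`. -/
theorem sum_cat_components_chainRecurrent_ge_cat
    (n : ℕ) (M : Type) [MetricSpace M]
    [ChartedSpace (EuclideanSpace ℝ (Fin n)) M]
    [IsManifold (𝓡 n) (⊤ : ℕ∞) M]
    [CompactSpace M]
    (v : (x : M) → TangentSpace (𝓡 n) x) (hv : IsSmoothVF v)
    (Φ : M → ℝ → M) (hΦ : IsFlowOf v Φ)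
    (r : ℕ) (Rc : Fin r → Set M)
    (hne : ∀ i, (Rc i).Nonempty)
    (hinj : Function.Injective Rc)
    (hunion : (⋃ i, Rc i) = chainRecurrentSet Φ)
    (hcomp : ∀ i, ∀ x ∈ Rc i, Rc i = connectedComponentIn (chainRecurrentSet Φ) x) :
    catSpace M ≤ ∑ i, catSet M (Rc i) :=
  sum_cat_components_chainRecurrent_ge_cat_general n M v Φ hΦ r Rc hne hinj hunion hcomp
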